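/- Let α, β ∈ ℝ \ ℚ, 0 < ε < 1/2 and T > 1. For each n ∈ ℕ there is at most one pair (m₁,m₂) ∈ ℤ² such that there exists (s,t) ∈ [0,T]² with ‖a_{s,t}·τ_{α,β}·(n,m₁,m₂)‖_∞ ≤ ε. Moreover, if such a pair (m₁,m₂) exists, then n < e^{2T} and n·⟨nα⟩·⟨nβ⟩ ≤ ε³. -/
import Mathlib

open Filter MeasureTheory Matrix

/-- `⟨x⟩`: the distance from `x` to the nearest integer. -/
noncomputable def nearInt (x : ℝ) : ℝ := ⨅ m : ℤ, |x - (m : ℝ)|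

/-- The matrix `a_{s,t} = diag(e^{-s-t}, e^s, e^t)`. -/
noncomputable def aMat (s t : ℝ) : Matrix (Fin 3) (Fin 3) ℝ :=
  Matrix.diagonal ![Real.exp (-s - t), Real.exp s, Real.exp t]

/-- `τ_{α,β}`: the lower triangular unipotent matrix with rows (1,0,0), (α,1,0), (β,0,1). -/
def tauMat (α β : ℝ) : Matrix (Fin 3) (Fin 3) ℝ :=
  Matrix.of ![![1, 0, 0], ![α, 1, 0], ![β, 0, 1]]

lemma nearInt_le (x : ℝ) (m : ℤ) : nearInt x ≤ |x - (m : ℝ)| :=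
  ciInf_le ⟨0, by rintro y ⟨k, rfl⟩; exact abs_nonneg _⟩ m

lemma nearInt_nonneg (x : ℝ) : 0 ≤ nearInt x :=
  le_ciInf fun m => abs_nonneg _

lemma key_mulVec (α β s t n m₁ m₂ : ℝ) :
    (aMat s t * tauMat α β).mulVec ![n, m₁, m₂] =
      ![Real.exp (-s - t) * n, Real.exp s * (α * n + m₁), Real.exp t * (β * n + m₂)] := by
  funext i
  fin_cases i <;>
    simp [aMat, tauMat, Matrix.mulVec, Matrix.mul_apply, Fin.sum_univ_three,
      Matrix.diagonal, dotProduct] <;> ring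

lemma comp_bounds {α β s t n m₁ m₂ ε : ℝ} (hε : 0 ≤ ε)
    (h : ‖(aMat s t * tauMat α β).mulVec ![n, m₁, m₂]‖ ≤ ε) :
    Real.exp (-s - t) * |n| ≤ ε ∧ Real.exp s * |α * n + m₁| ≤ ε ∧
      Real.exp t * |β * n + m₂| ≤ ε := by
  rw [key_mulVec] at h
  have h' := (pi_norm_le_iff_of_nonneg hε).1 h
  have h0 := h' 0
  have h1 := h' 1
  have h2 := h' 2
  simp [Real.norm_eq_abs, abs_mul, abs_of_pos (Real.exp_pos _)] at h0 h1 h2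
  exact ⟨h0, h1, h2⟩

theorem stmt16 (α β : ℝ) (hα : Irrational α) (hβ : Irrational β)
    (ε : ℝ) (hε0 : 0 < ε) (hε1 : ε < 1 / 2) (T : ℝ) (hT : 1 < T) (n : ℕ) (hn : 0 < n) :
    (∀ m₁ m₂ m₁' m₂' : ℤ,
      (∃ p : ℝ × ℝ, p.1 ∈ Set.Icc 0 T ∧ p.2 ∈ Set.Icc 0 T ∧
        ‖(aMat p.1 p.2 * tauMat α β).mulVec ![(n : ℝ), (m₁ : ℝ), (m₂ : ℝ)]‖ ≤ ε) →
      (∃ p : ℝ × ℝ, p.1 ∈ Set.Icc 0 T ∧ p.2 ∈ Set.Icc 0 T ∧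
        ‖(aMat p.1 p.2 * tauMat α β).mulVec ![(n : ℝ), (m₁' : ℝ), (m₂' : ℝ)]‖ ≤ ε) →
      m₁ = m₁' ∧ m₂ = m₂') ∧
    ((∃ m₁ m₂ : ℤ, ∃ p : ℝ × ℝ, p.1 ∈ Set.Icc 0 T ∧ p.2 ∈ Set.Icc 0 T ∧
        ‖(aMat p.1 p.2 * tauMat α β).mulVec ![(n : ℝ), (m₁ : ℝ), (m₂ : ℝ)]‖ ≤ ε) →
      (n : ℝ) < Real.exp (2 * T) ∧
        (n : ℝ) * nearInt (n * α) * nearInt (n * β) ≤ ε ^ 3) := by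
  constructor
  · rintro m₁ m₂ m₁' m₂' ⟨⟨s, t⟩, ⟨hs0, hsT⟩, ⟨ht0, htT⟩, h⟩
      ⟨⟨s', t'⟩, ⟨hs0', hsT'⟩, ⟨ht0', htT'⟩, h'⟩
    obtain ⟨-, hb, hc⟩ := comp_bounds hε0.le h
    obtain ⟨-, hb', hc'⟩ := comp_bounds hε0.le h'
    have es : (1 : ℝ) ≤ Real.exp s := Real.one_le_exp hs0
    have et : (1 : ℝ) ≤ Real.exp t := Real.one_le_exp ht0
    have es' : (1 : ℝ) ≤ Real.exp s' := Real.one_le_exp hs0'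
    have et' : (1 : ℝ) ≤ Real.exp t' := Real.one_le_exp ht0'
    have key : ∀ (x : ℝ) (a b : ℤ), |x + a| ≤ ε → |x + b| ≤ ε → a = b := by
      intro x a b ha hb
      have h3 : |(a : ℝ) - b| < 1 := by
        have h4 : |(x + a) - (x + b)| ≤ |x + a| + |x + b| := abs_sub _ _
        have h5 : (a : ℝ) - b = (x + a) - (x + b) := by ring
        rw [h5]; linarith
      have h6 : |a - b| < 1 := by exact_mod_cast h3
      rw [abs_lt] at h6
      omega
    constructor
    · exact key (α * n) m₁ m₁' (by nlinarith [abs_nonneg (α * n + (m₁:ℝ))])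
        (by nlinarith [abs_nonneg (α * n + (m₁':ℝ))])
    · exact key (β * n) m₂ m₂' (by nlinarith [abs_nonneg (β * n + (m₂:ℝ))])
        (by nlinarith [abs_nonneg (β * n + (m₂':ℝ))])
  · rintro ⟨m₁, m₂, ⟨s, t⟩, ⟨hs0, hsT⟩, ⟨ht0, htT⟩, h⟩
    obtain ⟨ha, hb, hc⟩ := comp_bounds hε0.le h
    rw [abs_of_nonneg (Nat.cast_nonneg n)] at ha
    have est : Real.exp (s + t) ≤ Real.exp (2 * T) := Real.exp_le_exp.2 (by linarith)
    have hpos : (0:ℝ) < Real.exp (s + t) := Real.exp_pos _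
    have hen : Real.exp (-s - t) * Real.exp (s + t) = 1 := by
      rw [← Real.exp_add, show -s - t + (s + t) = 0 by ring, Real.exp_zero]
    constructor
    · have hn' : (n : ℝ) ≤ ε * Real.exp (s + t) := by
        calc (n : ℝ) = (Real.exp (-s - t) * Real.exp (s + t)) * n := by rw [hen]; ring
          _ = (Real.exp (-s - t) * n) * Real.exp (s + t) := by ring
          _ ≤ ε * Real.exp (s + t) := mul_le_mul_of_nonneg_right ha hpos.le
      calc (n : ℝ) ≤ ε * Real.exp (s + t) := hn'
        _ < 1 * Real.exp (2 * T) := by nlinarith [Real.exp_pos (2 * T)]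
        _ = Real.exp (2 * T) := one_mul _
    · have h1 : nearInt (n * α) ≤ |α * n + m₁| := by
        have := nearInt_le ((n : ℝ) * α) (-m₁)
        simpa [sub_neg_eq_add, mul_comm] using this
      have h2 : nearInt (n * β) ≤ |β * n + m₂| := by
        have := nearInt_le ((n : ℝ) * β) (-m₂)
        simpa [sub_neg_eq_add, mul_comm] using this
      have e1 : Real.exp s * nearInt (n * α) ≤ ε :=
        le_trans (by nlinarith [Real.exp_pos s]) hb
      have e2 : Real.exp t * nearInt (n * β) ≤ ε :=
        le_trans (by nlinarith [Real.exp_pos t]) hc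
      have prod : (Real.exp (-s - t) * n) * (Real.exp s * nearInt (n * α)) *
          (Real.exp t * nearInt (n * β)) ≤ ε ^ 3 := by
        have n1 : 0 ≤ Real.exp (-s - t) * n := by positivity
        have n2 : 0 ≤ Real.exp s * nearInt (n * α) := by
          have := nearInt_nonneg ((n:ℝ) * α); positivity
        have n3 : 0 ≤ Real.exp t * nearInt (n * β) := by
          have := nearInt_nonneg ((n:ℝ) * β); positivity
        calc (Real.exp (-s - t) * n) * (Real.exp s * nearInt (n * α)) *
            (Real.exp t * nearInt (n * β)) ≤ ε * ε * ε := by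
              exact mul_le_mul (mul_le_mul ha e1 n2 hε0.le) e2 n3 (by positivity)
          _ = ε ^ 3 := by ring
      have hexp : Real.exp (-s - t) * Real.exp s * Real.exp t = 1 := by
        rw [← Real.exp_add, ← Real.exp_add, show -s - t + s + t = 0 by ring, Real.exp_zero]
      calc (n : ℝ) * nearInt (n * α) * nearInt (n * β)
          = Real.exp (-s - t) * Real.exp s * Real.exp t *
              ((n : ℝ) * nearInt (n * α) * nearInt (n * β)) := by rw [hexp]; ring
        _ = (Real.exp (-s - t) * n) * (Real.exp s * nearInt (n * α)) *
              (Real.exp t * nearInt (n * β)) := by ring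
        _ ≤ ε ^ 3 := prod
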